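/- For each fixed r > 0 there exist constants C > 0 and ρ₀ > 0 such that for all 0 < ρ < ρ₀, | ∫_{B_r} 8ρ² log(1 + ρ²/|y|²)/(ρ² + |y|²)² dy − 8π | ≤ C ρ⁴; since the integrand is radial, the corresponding integral over the upper half-disk B_r⁺ equals half of this, namely 4π + O(ρ⁴). -/

import Mathlib

open MeasureTheory Real
open Set Metric


noncomputable abbrev E2 := EuclideanSpace ℝ (Fin 2)

lemma integrable_fun_norm_of_int {f : ℝ → ℝ}
    (hf : IntegrableOn (fun y : ℝ => y * f y) (Set.Ioi (0:ℝ))) :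
    Integrable (fun x : E2 => f ‖x‖) := by
  have hA : Integrable (fun x : Set.Ioi (0:ℝ) => f x.1) (Measure.volumeIoiPow 1) := by
    rw [Measure.volumeIoiPow,
      integrable_withDensity_iff_integrable_smul'
        ((measurable_subtype_coe.pow_const 1).ennreal_ofReal)
        (Filter.Eventually.of_forall fun x => ENNReal.ofReal_lt_top)]
    have h1 : Integrable ((fun y : ℝ => y * f y) ∘ (Subtype.val : Set.Ioi (0:ℝ) → ℝ))
        (Measure.comap Subtype.val volume) := by
      refine ((MeasurableEmbedding.subtype_coe measurableSet_Ioi).integrable_map_iff).mp ?_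
      rwa [map_comap_subtype_coe measurableSet_Ioi]
    convert h1 using 1
    funext x
    simp [ENNReal.toReal_ofReal x.2.out.le, smul_eq_mul]
  have hdim : Module.finrank ℝ E2 - 1 = 1 := by simp [finrank_euclideanSpace]
  have hB : Integrable (fun z : sphere (0:E2) 1 × Set.Ioi (0:ℝ) => f z.2.1)
      ((volume : Measure E2).toSphere.prod
        (Measure.volumeIoiPow (Module.finrank ℝ E2 - 1))) := by
    rw [hdim]
    simpa using (integrable_const (1:ℝ)).smul_prod hA
  have hC := ((volume : Measure E2).measurePreserving_homeomorphUnitSphereProd.integrable_comp_emb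
      (Homeomorph.measurableEmbedding _)).mpr hB
  have hC' : Integrable (fun x : ({0}ᶜ : Set E2) => f ‖(x : E2)‖)
      (Measure.comap Subtype.val volume) := by
    simpa [Function.comp_def] using hC
  have hD : Integrable (fun x : E2 => f ‖x‖) (volume.restrict ({0}ᶜ : Set E2)) := by
    rw [← map_comap_subtype_coe (MeasurableSet.compl (measurableSet_singleton (0:E2)))]
    exact ((MeasurableEmbedding.subtype_coe
      (MeasurableSet.compl (measurableSet_singleton (0:E2)))).integrable_map_iff).mpr hC'
  rwa [MeasureTheory.restrict_compl_singleton] at hD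

lemma integral_ball_norm (R : ℝ) (g : ℝ → ℝ) :
    (∫ y in Metric.ball (0 : E2) R, g ‖y‖) = (2 * π) * ∫ s in Set.Ioo (0:ℝ) R, s * g s := by
  have h1 : (∫ y in Metric.ball (0 : E2) R, g ‖y‖)
      = ∫ y : E2, Set.indicator (Set.Iio R) g ‖y‖ := by
    rw [← integral_indicator measurableSet_ball]
    congr 1
    funext x
    by_cases h : ‖x‖ < R <;>
      simp [Set.indicator, mem_ball_zero_iff, h, Set.mem_Iio]
  rw [h1, integral_fun_norm_addHaar (volume : Measure E2) (Set.indicator (Set.Iio R) g)]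
  have hdim : Module.finrank ℝ E2 = 2 := by simp [finrank_euclideanSpace]
  rw [hdim]
  have hvol : (volume (Metric.ball (0:E2) 1)).toReal = π := by
    rw [EuclideanSpace.volume_ball]
    have hG : Real.Gamma ((Fintype.card (Fin 2) : ℝ) / 2 + 1) = 1 := by
      norm_num
    rw [hG]
    simp [Real.sq_sqrt pi_nonneg, ENNReal.toReal_ofReal pi_nonneg,
      Real.sqrt_nonneg, ← ENNReal.ofReal_pow, Real.sq_sqrt pi_nonneg]
  rw [measureReal_def, hvol]
  have h2 : (∫ y in Set.Ioi (0:ℝ), y ^ (2-1) • Set.indicator (Set.Iio R) g y)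
      = ∫ s in Set.Ioo (0:ℝ) R, s * g s := by
    have : ∀ y : ℝ, y ^ (2-1) • Set.indicator (Set.Iio R) g y
        = Set.indicator (Set.Iio R) (fun s => s * g s) y := by
      intro y
      by_cases h : y ∈ Set.Iio R <;> simp [Set.indicator, h]
    simp_rw [this]
    rw [integral_indicator measurableSet_Iio, Measure.restrict_restrict measurableSet_Iio,
      Set.Iio_inter_Ioi]
  rw [h2]
  simp [smul_eq_mul]
  ring

lemma log_le_twice (t : ℝ) (ht : 0 ≤ t) : Real.log (1 + t^2) ≤ 2*t := by
  have h1 : (1:ℝ) + t^2 ≤ (1+t)^2 := by nlinarith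
  have h2 : Real.log (1 + t^2) ≤ Real.log ((1+t)^2) :=
    Real.log_le_log (by positivity) h1
  rw [Real.log_pow] at h2
  have h3 : Real.log (1+t) ≤ t := by
    have := Real.log_le_sub_one_of_pos (show (0:ℝ) < 1+t by linarith)
    linarith
  push_cast at h2
  linarith

lemma h_bound (ρ s : ℝ) (hρ : 0 < ρ) (hs : 0 < s) :
    0 ≤ s * (8*ρ^2*Real.log (1+ρ^2/s^2)/(ρ^2+s^2)^2) ∧
    s * (8*ρ^2*Real.log (1+ρ^2/s^2)/(ρ^2+s^2)^2) ≤ 16/ρ := by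
  have hlognn : 0 ≤ Real.log (1+ρ^2/s^2) := by
    apply Real.log_nonneg
    nlinarith [div_nonneg (sq_nonneg ρ) (sq_nonneg s)]
  refine ⟨by positivity, ?_⟩
  have h1 : Real.log (1+ρ^2/s^2) ≤ 2*(ρ/s) := by
    have := log_le_twice (ρ/s) (by positivity)
    rwa [div_pow] at this
  have hsL : s * Real.log (1+ρ^2/s^2) ≤ 2*ρ := by
    rw [mul_comm]
    calc Real.log (1+ρ^2/s^2) * s ≤ (2*(ρ/s)) * s := by
          exact mul_le_mul_of_nonneg_right h1 hs.le
      _ = 2*ρ := by field_simp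
  have heq : s * (8*ρ^2*Real.log (1+ρ^2/s^2)/(ρ^2+s^2)^2)
      = (8*ρ^2*(s*Real.log (1+ρ^2/s^2)))/(ρ^2+s^2)^2 := by ring
  rw [heq, div_le_div_iff₀ (by positivity) hρ]
  nlinarith [mul_le_mul_of_nonneg_left hsL (show (0:ℝ) ≤ 8*ρ^3 by positivity),
    sq_nonneg (ρ*s), sq_nonneg s, sq_nonneg (ρ^2+s^2), mul_pos hρ hs,
    pow_pos hρ 4, sq_nonneg (ρ^2 - s^2)]

lemma ftc_part (ρ R : ℝ) (hρ : 0 < ρ) (hR : 0 < R) :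
    (∫ s in Set.Ioo (0:ℝ) R, s * (8*ρ^2*Real.log (1+ρ^2/s^2)/(ρ^2+s^2)^2))
      = 4*R^2*(1+Real.log (1+ρ^2/R^2))/(ρ^2+R^2) := by
  set h : ℝ → ℝ := fun s => s * (8*ρ^2*Real.log (1+ρ^2/s^2)/(ρ^2+s^2)^2) with hh
  set H : ℝ → ℝ := fun s => (-4*ρ^2 + 4*s^2*Real.log (ρ^2+s^2) - 8*(s*(s*Real.log s)))/(ρ^2+s^2)
    with hH
  have hd0 : ∀ s : ℝ, (0:ℝ) < ρ^2+s^2 := fun s => by positivity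
  have HC : Continuous H := by
    apply Continuous.div
    · have c1 : Continuous fun s : ℝ => Real.log (ρ^2+s^2) :=
        (continuous_const.add (continuous_pow 2)).log (fun x => (hd0 x).ne')
      have c2 : Continuous fun s : ℝ => s * Real.log s := Real.continuous_mul_log
      fun_prop
    · fun_prop
    · exact fun x => (hd0 x).ne'
  have Hderiv : ∀ s ∈ Set.Ioo (0:ℝ) R, HasDerivAt H (h s) s := by
    intro s hs
    have hs0 : s ≠ 0 := hs.1.ne'
    have hds : (ρ^2+s^2) ≠ 0 := (hd0 s).ne'
    have a1 : HasDerivAt (fun s : ℝ => s^2) (2*s) s := by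
      simpa using hasDerivAt_pow 2 s
    have hden : HasDerivAt (fun s : ℝ => ρ^2+s^2) (2*s) s := by
      simpa using a1.const_add (ρ^2)
    have l1 : HasDerivAt (fun s : ℝ => Real.log (ρ^2+s^2)) ((2*s)/(ρ^2+s^2)) s :=
      hden.log hds
    have l2 : HasDerivAt Real.log s⁻¹ s := Real.hasDerivAt_log hs0
    have a2 : HasDerivAt (fun s : ℝ => s^2 * Real.log (ρ^2+s^2))
        (2*s*Real.log (ρ^2+s^2) + s^2*((2*s)/(ρ^2+s^2))) s := a1.mul l1
    have a3 : HasDerivAt (fun s : ℝ => s * Real.log s)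
        (1*Real.log s + s*s⁻¹) s := (hasDerivAt_id s).mul l2
    have a4 : HasDerivAt (fun s : ℝ => s*(s * Real.log s))
        (1*(s*Real.log s) + s*(1*Real.log s + s*s⁻¹)) s := (hasDerivAt_id s).mul a3
    have hnum : HasDerivAt (fun s : ℝ => -4*ρ^2 + 4*(s^2*Real.log (ρ^2+s^2)) - 8*(s*(s*Real.log s)))
        (4*(2*s*Real.log (ρ^2+s^2) + s^2*((2*s)/(ρ^2+s^2))) - 8*(1*(s*Real.log s) + s*(1*Real.log s + s*s⁻¹))) s :=
      ((a2.const_mul 4).const_add (-4*ρ^2)).sub (a4.const_mul 8)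
    have hdiv := hnum.div hden hds
    have hHeq : H = fun s : ℝ => (-4*ρ^2 + 4*(s^2*Real.log (ρ^2+s^2)) - 8*(s*(s*Real.log s)))/(ρ^2+s^2) := by
      funext x; rw [hH]; ring
    rw [hHeq]
    refine HasDerivAt.congr_deriv hdiv ?_
    have hlog : Real.log (1+ρ^2/s^2) = Real.log (ρ^2+s^2) - 2*Real.log s := by
      rw [show 1+ρ^2/s^2 = (ρ^2+s^2)/s^2 by field_simp; ring,
        Real.log_div hds (by positivity), Real.log_pow]
      push_cast; ring
    rw [hh]
    simp only []
    rw [hlog]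
    field_simp
    all_goals ring
  have hint : IntervalIntegrable h volume 0 R := by
    rw [intervalIntegrable_iff_integrableOn_Ioc_of_le hR.le]
    have hmeas : Measurable h := by
      have hlogm : Measurable fun s : ℝ => Real.log (1+ρ^2/s^2) :=
        Real.measurable_log.comp (measurable_const.add
          (measurable_const.div (measurable_id.pow_const 2)))
      exact measurable_id.mul (((measurable_const.mul hlogm)).div
        ((measurable_const.add (measurable_id.pow_const 2)).pow_const 2))
    refine Integrable.mono' (g := fun _ => 16/ρ) ?_ ?_ ?_
    · exact integrableOn_const measure_Ioc_lt_top.ne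
    · exact hmeas.aestronglyMeasurable
    · filter_upwards [ae_restrict_mem measurableSet_Ioc] with s hs
      obtain ⟨hb0, hb1⟩ := h_bound ρ s hρ hs.1
      rw [Real.norm_eq_abs, abs_of_nonneg hb0]
      exact hb1
  rw [← MeasureTheory.integral_Ioc_eq_integral_Ioo, ← intervalIntegral.integral_of_le hR.le,
    intervalIntegral.integral_eq_sub_of_hasDerivAt_of_le hR.le HC.continuousOn Hderiv hint]
  have hH0 : H 0 = -4 := by
    rw [hH]
    simp
    field_simp
  have hlogR : Real.log (1+ρ^2/R^2) = Real.log (ρ^2+R^2) - 2*Real.log R := by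
    rw [show 1+ρ^2/R^2 = (ρ^2+R^2)/R^2 by field_simp; ring,
      Real.log_div (hd0 R).ne' (by positivity), Real.log_pow]
    push_cast; ring
  rw [hH0, hH, hlogR]
  simp only []
  field_simp
  ring

lemma bubble_est (r ρ : ℝ) (hr : 0 < r) (hρ : 0 < ρ) :
    |2*π*(4*r^2*(1+Real.log (1+ρ^2/r^2))/(ρ^2+r^2)) - 8*π| ≤ (8*π/r^4)*ρ^4 := by
  set L := Real.log (1+ρ^2/r^2) with hL
  have hD : (0:ℝ) < ρ^2+r^2 := by positivity
  have hr2 : (0:ℝ) < r^2 := by positivity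
  have hU : L ≤ ρ^2/r^2 := by
    have := Real.log_le_sub_one_of_pos (show (0:ℝ) < 1+ρ^2/r^2 by positivity)
    linarith
  have hU' : r^2*L ≤ ρ^2 := by
    have := mul_le_mul_of_nonneg_left hU hr2.le
    rw [mul_div_cancel₀] at this
    · linarith
    · exact hr2.ne'
  have hLo2 : ρ^2/(ρ^2+r^2) ≤ L := by
    have h := Real.log_le_sub_one_of_pos (show (0:ℝ) < (1+ρ^2/r^2)⁻¹ by positivity)
    rw [Real.log_inv] at h
    have hinv : (1+ρ^2/r^2)⁻¹ = r^2/(ρ^2+r^2) := by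
      rw [show (1:ℝ)+ρ^2/r^2 = (ρ^2+r^2)/r^2 by field_simp; ring, inv_div]
    rw [hinv] at h
    have : 1 - r^2/(ρ^2+r^2) = ρ^2/(ρ^2+r^2) := by field_simp; ring
    linarith
  have hLo2' : ρ^2 ≤ L*(ρ^2+r^2) := (div_le_iff₀ hD).mp hLo2
  have habs : |r^2*L - ρ^2| ≤ ρ^4/r^2 := by
    rw [abs_le]
    constructor
    · have h5 : 0 ≤ (r^2*L - ρ^2 + ρ^4/r^2) * (ρ^2+r^2) := by
        have h6 : ρ^4/r^2 * r^2 = ρ^4 := by field_simp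
        have h7 : (0:ℝ) ≤ ρ^4/r^2 := by positivity
        nlinarith [mul_le_mul_of_nonneg_left hLo2' hr2.le]
      have h8 := (mul_nonneg_iff_of_pos_right hD).mp h5
      linarith
    · have : (0:ℝ) ≤ ρ^4/r^2 := by positivity
      linarith
  have key : 2*π*(4*r^2*(1+L)/(ρ^2+r^2)) - 8*π = 8*π*(r^2*L - ρ^2)/(ρ^2+r^2) := by
    field_simp
    ring
  rw [key, abs_div, abs_of_pos hD, div_le_iff₀ hD, abs_mul,
    show |8*π| = 8*π from abs_of_pos (by positivity)]
  calc 8*π*|r^2*L - ρ^2| ≤ 8*π*(ρ^4/r^2) :=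
        mul_le_mul_of_nonneg_left habs (by positivity)
    _ ≤ 8*π/r^4*ρ^4*(ρ^2+r^2) := by
        rw [mul_div_assoc' (8*π), div_mul_eq_mul_div, div_mul_eq_mul_div,
          div_le_div_iff₀ hr2 (by positivity)]
        nlinarith [mul_le_mul_of_nonneg_left (show (r:ℝ)^2 ≤ ρ^2+r^2 by nlinarith [sq_nonneg ρ])
          (show (0:ℝ) ≤ 8*π*ρ^4*r^2 by positivity)]

lemma half_integral {r : ℝ} {g : ℝ → ℝ}
    (hInt : IntegrableOn (fun y : E2 => g ‖y‖) (Metric.ball (0:E2) r)) :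
    (∫ y in Metric.ball (0:E2) r ∩ {y : E2 | 0 < y 1}, g ‖y‖)
      = (∫ y in Metric.ball (0:E2) r, g ‖y‖)/2 := by
  set P : Set E2 := {y : E2 | 0 < y 1} with hP
  set N : Set E2 := {y : E2 | y 1 < 0} with hN
  have hcoord : Measurable fun y : E2 => y 1 := by fun_prop
  have hPm : MeasurableSet P := measurableSet_lt measurable_const hcoord
  have hNm : MeasurableSet N := measurableSet_lt hcoord measurable_const
  have hZ : volume {y : E2 | y 1 = 0} = 0 := by
    have hK : {y : E2 | y 1 = 0}
        = (LinearMap.ker (EuclideanSpace.projₗ (𝕜 := ℝ) (1 : Fin 2)) : Set E2) := by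
      ext y; simp [LinearMap.mem_ker]
    rw [hK]
    apply Measure.addHaar_submodule
    intro htop
    have h1 : (EuclideanSpace.single (1 : Fin 2) (1:ℝ)) ∈
        LinearMap.ker (EuclideanSpace.projₗ (𝕜 := ℝ) (1 : Fin 2)) := by
      rw [htop]; trivial
    rw [LinearMap.mem_ker] at h1
    simp [EuclideanSpace.single_apply] at h1
  have key : (∫ y in Metric.ball (0:E2) r ∩ N, g ‖y‖)
      = ∫ y in Metric.ball (0:E2) r ∩ P, g ‖y‖ := by
    have hmp : MeasurePreserving (fun y : E2 => -y) volume volume :=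
      Measure.measurePreserving_neg _
    have hemb : MeasurableEmbedding (fun y : E2 => -y) :=
      (Homeomorph.neg E2).measurableEmbedding
    have h := hmp.setIntegral_preimage_emb hemb (fun y : E2 => g ‖y‖)
      (Metric.ball (0:E2) r ∩ N)
    have hpre : (fun y : E2 => -y) ⁻¹' (Metric.ball (0:E2) r ∩ N)
        = Metric.ball (0:E2) r ∩ P := by
      ext y
      simp only [Set.mem_preimage, Set.mem_inter_iff, mem_ball_zero_iff, norm_neg,
        hN, hP, Set.mem_setOf_eq]
      constructor
      · rintro ⟨h1, h2⟩
        refine ⟨h1, ?_⟩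
        have : (-y) 1 = -(y 1) := rfl
        rw [this] at h2; linarith
      · rintro ⟨h1, h2⟩
        refine ⟨h1, ?_⟩
        have : (-y) 1 = -(y 1) := rfl
        rw [this]; linarith
    rw [hpre] at h
    simp only [norm_neg] at h
    exact h.symm
  have hunion : (∫ y in Metric.ball (0:E2) r, g ‖y‖)
      = (∫ y in Metric.ball (0:E2) r ∩ P, g ‖y‖)
        + ∫ y in Metric.ball (0:E2) r ∩ N, g ‖y‖ := by
    have hae : (Metric.ball (0:E2) r : Set E2)
        =ᵐ[volume] (((Metric.ball (0:E2) r ∩ P) ∪ (Metric.ball (0:E2) r ∩ N)) : Set E2) := by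
      rw [MeasureTheory.ae_eq_set]
      constructor
      · apply measure_mono_null _ hZ
        intro y hy
        simp only [Set.mem_diff, Set.mem_union, Set.mem_inter_iff, hP, hN,
          Set.mem_setOf_eq] at hy
        simp only [Set.mem_setOf_eq]
        rcases lt_trichotomy (y 1) 0 with h | h | h
        · exact absurd (Or.inr ⟨hy.1, h⟩) hy.2
        · exact h
        · exact absurd (Or.inl ⟨hy.1, h⟩) hy.2
      · have he : (((Metric.ball (0:E2) r ∩ P) ∪ (Metric.ball (0:E2) r ∩ N)) : Set E2)
            \ Metric.ball (0:E2) r = ∅ := by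
          rw [Set.diff_eq_empty]
          exact Set.union_subset Set.inter_subset_left Set.inter_subset_left
        rw [he]
        exact measure_empty
    rw [setIntegral_congr_set hae]
    apply setIntegral_union
    · rw [hP, hN]
      apply Set.disjoint_left.mpr
      rintro y ⟨-, h1⟩ ⟨-, h2⟩
      simp only [Set.mem_setOf_eq] at h1 h2
      linarith
    · exact (measurableSet_ball).inter hNm
    · exact hInt.mono_set Set.inter_subset_left
    · exact hInt.mono_set Set.inter_subset_left
  rw [hunion, ← key]
  ring


/-- For each fixed `r > 0` there are `C > 0` and `ρ₀ > 0` such that for all `0 < ρ < ρ₀`,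
`|∫_{B_r} 8ρ² log(1 + ρ²/|y|²)/(ρ² + |y|²)² dy − 8π| ≤ C ρ⁴`; moreover, since the integrand
is radial, the integral over the upper half-disk `B_r⁺` equals half of the full integral. -/
theorem integral_log_bubble (r : ℝ) (hr : 0 < r) :
    ∃ C > (0 : ℝ), ∃ ρ₀ > (0 : ℝ), ∀ ρ : ℝ, 0 < ρ → ρ < ρ₀ →
      |(∫ y in Metric.ball (0 : EuclideanSpace ℝ (Fin 2)) r,
          8 * ρ ^ 2 * Real.log (1 + ρ ^ 2 / ‖y‖ ^ 2) / (ρ ^ 2 + ‖y‖ ^ 2) ^ 2) - 8 * π| ≤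
        C * ρ ^ 4 ∧
      (∫ y in Metric.ball (0 : EuclideanSpace ℝ (Fin 2)) r ∩
          {y : EuclideanSpace ℝ (Fin 2) | 0 < y 1},
          8 * ρ ^ 2 * Real.log (1 + ρ ^ 2 / ‖y‖ ^ 2) / (ρ ^ 2 + ‖y‖ ^ 2) ^ 2) =
        (∫ y in Metric.ball (0 : EuclideanSpace ℝ (Fin 2)) r,
          8 * ρ ^ 2 * Real.log (1 + ρ ^ 2 / ‖y‖ ^ 2) / (ρ ^ 2 + ‖y‖ ^ 2) ^ 2) / 2 := by
  refine ⟨8*π/r^4, by positivity, 1, one_pos, fun ρ hρ _ => ?_⟩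
  set g : ℝ → ℝ := fun s => 8 * ρ ^ 2 * Real.log (1 + ρ ^ 2 / s ^ 2) / (ρ ^ 2 + s ^ 2) ^ 2 with hg
  show |(∫ y in Metric.ball (0:E2) r, g ‖y‖) - 8*π| ≤ 8*π/r^4 * ρ^4 ∧
    (∫ y in Metric.ball (0:E2) r ∩ {y : E2 | 0 < y 1}, g ‖y‖)
      = (∫ y in Metric.ball (0:E2) r, g ‖y‖)/2
  have hIoo : IntegrableOn (fun s : ℝ => s * g s) (Set.Ioo (0:ℝ) r) := by
    have hlogm : Measurable fun s : ℝ => Real.log (1+ρ^2/s^2) :=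
      Real.measurable_log.comp (measurable_const.add
        (measurable_const.div (measurable_id.pow_const 2)))
    refine Integrable.mono' (g := fun _ => 16/ρ)
      (integrableOn_const measure_Ioo_lt_top.ne) ?_ ?_
    · exact (measurable_id.mul (((measurable_const.mul hlogm)).div
        ((measurable_const.add (measurable_id.pow_const 2)).pow_const 2))).aestronglyMeasurable
    · filter_upwards [ae_restrict_mem measurableSet_Ioo] with s hs
      obtain ⟨hb0, hb1⟩ := h_bound ρ s hρ hs.1
      rw [Real.norm_eq_abs, abs_of_nonneg hb0]
      exact hb1
  have hIoi : IntegrableOn (fun y : ℝ => y * Set.indicator (Set.Iio r) g y) (Set.Ioi (0:ℝ)) := by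
    have heq : (fun y : ℝ => y * Set.indicator (Set.Iio r) g y)
        = Set.indicator (Set.Iio r) (fun y => y * g y) := by
      funext y; by_cases h : y ∈ Set.Iio r <;> simp [Set.indicator, h]
    rw [heq, IntegrableOn, integrable_indicator_iff measurableSet_Iio, IntegrableOn,
      Measure.restrict_restrict measurableSet_Iio, Set.Iio_inter_Ioi]
    exact hIoo
  have hIntE : Integrable (fun x : E2 => Set.indicator (Set.Iio r) g ‖x‖) :=
    integrable_fun_norm_of_int hIoi
  have hInt : IntegrableOn (fun y : E2 => g ‖y‖) (Metric.ball (0:E2) r) := by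
    have heq : Set.indicator (Metric.ball (0:E2) r) (fun y : E2 => g ‖y‖)
        = fun x : E2 => Set.indicator (Set.Iio r) g ‖x‖ := by
      funext x
      by_cases h : ‖x‖ < r <;>
        simp [Set.indicator, mem_ball_zero_iff, h, Set.mem_Iio]
    have h2 : Integrable (Set.indicator (Metric.ball (0:E2) r) (fun y : E2 => g ‖y‖)) := by
      rw [heq]; exact hIntE
    exact (integrable_indicator_iff measurableSet_ball).mp h2
  constructor
  · rw [integral_ball_norm r g,
      show (∫ s in Set.Ioo (0:ℝ) r, s * g s)
          = 4*r^2*(1+Real.log (1+ρ^2/r^2))/(ρ^2+r^2) from ftc_part ρ r hρ hr]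
    exact bubble_est r ρ hr hρ
  · exact half_integral hInt
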